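/- Elementary equivalence is an equivalence relation preserved under isomorphism, and if two groups G and H are elementarily equivalent and G satisfies a first-order sentence σ, then H satisfies σ; consequently, the genus-3 non-orientable surface group ⟨x,y,z | x²y²z²⟩ is not elementarily equivalent to the free group of rank 2, witnessed by the sentence ∀x∀y∀z (x²y²z² = 1 → ([x,y]=1 ∧ [x,z]=1 ∧ [y,z]=1)). -/

import Mathlib

open FirstOrder FirstOrder.Language

/-- The first-order language of groups: a constant `1`, a unary function `⁻¹`,
a binary function `*`, and no relations. -/
def grpLang : FirstOrder.Language where
  Functions n := match n with
    | 0 => Unit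
    | 1 => Unit
    | 2 => Unit
    | _ => Empty
  Relations _ := Empty

/-- Any group is a structure for the language of groups. -/
instance grpLangStructure (G : Type*) [Group G] : grpLang.Structure G where
  funMap {n} f xs := match n, f with
    | 0, _ => 1
    | 1, _ => (xs 0)⁻¹
    | 2, _ => xs 0 * xs 1
  RelMap {n} r := by cases r

/-- Multiplication term. -/
def tmul {α : Type} {n : ℕ} (t s : grpLang.Term (α ⊕ Fin n)) :
    grpLang.Term (α ⊕ Fin n) :=
  Term.func (l := 2) (() : grpLang.Functions 2) ![t, s]

/-- Identity term. -/
def tone {α : Type} {n : ℕ} : grpLang.Term (α ⊕ Fin n) :=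
  Term.func (l := 0) (() : grpLang.Functions 0) ![]

/-- `x² y² z² = 1` as a formula in bound variables `&0, &1, &2`. -/
def eqForm : grpLang.BoundedFormula Empty 3 :=
  tmul (tmul (tmul (&0) (&0)) (tmul (&1) (&1))) (tmul (&2) (&2)) =' tone

/-- `x * y = y * x` as a formula. -/
def commForm (i j : Fin 3) : grpLang.BoundedFormula Empty 3 :=
  tmul (&i) (&j) =' tmul (&j) (&i)

/-- The sentence `∀x∀y∀z (x²y²z² = 1 → ([x,y]=1 ∧ [x,z]=1 ∧ [y,z]=1))`. -/
def lyndonSentence : grpLang.Sentence :=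
  ∀' ∀' ∀' (eqForm ⟹ (commForm 0 1 ⊓ commForm 0 2 ⊓ commForm 1 2))

def surfaceRels : Set (FreeGroup (Fin 3)) :=
  {FreeGroup.of 0 ^ 2 * FreeGroup.of 1 ^ 2 * FreeGroup.of 2 ^ 2}

abbrev SurfaceGroup : Type := PresentedGroup surfaceRels


/-! ### The Heisenberg group over `ZMod 2` -/

structure Heis : Type where
  a : ZMod 2
  b : ZMod 2
  c : ZMod 2

namespace Heis

private lemma z2 : ∀ u : ZMod 2, u + u = 0 := by decide

instance : Mul Heis := ⟨fun x y => ⟨x.a + y.a, x.b + y.b, x.c + y.c + x.a * y.b⟩⟩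
instance : One Heis := ⟨⟨0, 0, 0⟩⟩
instance : Inv Heis := ⟨fun x => ⟨x.a, x.b, x.c + x.a * x.b⟩⟩

lemma mul_def (x y : Heis) :
    x * y = ⟨x.a + y.a, x.b + y.b, x.c + y.c + x.a * y.b⟩ := rfl
lemma one_def : (1 : Heis) = ⟨0, 0, 0⟩ := rfl
lemma inv_def (x : Heis) : x⁻¹ = ⟨x.a, x.b, x.c + x.a * x.b⟩ := rfl

instance : Group Heis where
  mul_assoc x y z := by
    simp only [mul_def, mk.injEq]
    refine ⟨by ring, by ring, by ring⟩
  one_mul x := by cases x; simp [mul_def, one_def]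
  mul_one x := by cases x; simp [mul_def, one_def]
  inv_mul_cancel x := by
    cases x with
    | mk a b c =>
      simp only [inv_def, mul_def, one_def, mk.injEq]
      refine ⟨z2 a, z2 b, ?_⟩
      have : c + a * b + c + a * b = (c + a * b) + (c + a * b) := by ring
      rw [this, z2]

lemma sq_def (x : Heis) : x ^ 2 = ⟨0, 0, x.a * x.b⟩ := by
  rw [pow_two, mul_def]
  cases x with
  | mk a b c =>
    simp only [mk.injEq]
    refine ⟨z2 a, z2 b, ?_⟩
    have : c + c + a * b = (c + c) + a * b := by ring
    rw [this, z2, zero_add]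

lemma key (x y z : Heis) (h : x ^ 2 * y ^ 2 * z ^ 2 = 1) :
    x.a * x.b + y.a * y.b + z.a * z.b = 0 := by
  simp only [sq_def, mul_def, one_def, mk.injEq, zero_mul, add_zero, zero_add,
    mul_zero] at h
  exact h.2.2

/-- Projection onto the first coordinate, as a homomorphism. -/
def pa : Heis →* Multiplicative (ZMod 2) where
  toFun x := Multiplicative.ofAdd x.a
  map_one' := rfl
  map_mul' _ _ := rfl

/-- Projection onto the second coordinate, as a homomorphism. -/
def pb : Heis →* Multiplicative (ZMod 2) where
  toFun x := Multiplicative.ofAdd x.b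
  map_one' := rfl
  map_mul' _ _ := rfl

end Heis

private lemma zmodContra : ∀ p1 p2 p3 q1 q2 q3 a b c a' b' c' : ZMod 2,
    (p1 * p1 + p2 * p2 + p3 * p3 = 0 ∧
    q1 * q1 + q2 * q2 + q3 * q3 = 0 ∧
    p1 * q1 + p2 * q2 + p3 * q3 = 0 ∧
    1 = a * p1 + b * p2 + c * p3 ∧
    0 = a * q1 + b * q2 + c * q3 ∧
    1 = a' * q1 + b' * q2 + c' * q3) → False := by decide

/-! ### Lyndon's theorem -/

/-- Core case of Lyndon's theorem: generating solutions of `x²y²z²=1` in a free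
group force the basis to be a subsingleton, whence everything commutes. -/
lemma lyndon_core {S : Type*} (x y z : FreeGroup S)
    (heq : x ^ 2 * y ^ 2 * z ^ 2 = 1)
    (hgen : Subgroup.closure ({x, y, z} : Set (FreeGroup S)) = ⊤) :
    x * y = y * x ∧ x * z = z * x ∧ y * z = z * y := by
  classical
  -- the mod-2 exponent-sum homomorphisms
  let μ : (S → ZMod 2) → (FreeGroup S →* Multiplicative (ZMod 2)) :=
    fun f => FreeGroup.lift (fun u => Multiplicative.ofAdd (f u))
  let v : FreeGroup S → (S → ZMod 2) → ZMod 2 := fun w f => Multiplicative.toAdd (μ f w)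
  have hss : Subsingleton S := by
    by_contra hs
    rw [not_subsingleton_iff_nontrivial] at hs
    obtain ⟨s, t, hst⟩ := hs
    -- Claim C: the "cup product" vanishes
    have claimC : ∀ f g : S → ZMod 2,
        v x f * v x g + v y f * v y g + v z f * v z g = 0 := by
      intro f g
      let ψ : FreeGroup S →* Heis := FreeGroup.lift (fun u => (⟨f u, g u, 0⟩ : Heis))
      have hpa : Heis.pa.comp ψ = μ f := by
        apply FreeGroup.ext_hom
        intro u
        simp [ψ, μ, Heis.pa]
      have hpb : Heis.pb.comp ψ = μ g := by
        apply FreeGroup.ext_hom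
        intro u
        simp [ψ, μ, Heis.pb]
      have ha : ∀ w : FreeGroup S, (ψ w).a = v w f := by
        intro w
        have := DFunLike.congr_fun hpa w
        simpa [Heis.pa, v] using congrArg Multiplicative.toAdd this
      have hb : ∀ w : FreeGroup S, (ψ w).b = v w g := by
        intro w
        have := DFunLike.congr_fun hpb w
        simpa [Heis.pb, v] using congrArg Multiplicative.toAdd this
      have h1 : (ψ x) ^ 2 * (ψ y) ^ 2 * (ψ z) ^ 2 = 1 := by
        rw [← map_pow, ← map_pow, ← map_pow, ← map_mul, ← map_mul, heq, map_one]
      have := Heis.key _ _ _ h1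
      rwa [ha, hb, ha, hb, ha, hb] at this
    -- span: every element's exponent vector is a combination of those of x, y, z
    have span : ∀ w : FreeGroup S, ∃ a b c : ZMod 2,
        ∀ f, v w f = a * v x f + b * v y f + c * v z f := by
      intro w
      have hw : w ∈ Subgroup.closure ({x, y, z} : Set (FreeGroup S)) := by
        rw [hgen]; exact Subgroup.mem_top w
      induction hw using Subgroup.closure_induction with
      | mem g hg =>
        rcases hg with rfl | rfl | rfl
        · exact ⟨1, 0, 0, fun f => by ring⟩
        · exact ⟨0, 1, 0, fun f => by ring⟩
        · exact ⟨0, 0, 1, fun f => by ring⟩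
      | one => exact ⟨0, 0, 0, fun f => by simp [v]⟩
      | mul g h _ _ ihg ihh =>
        obtain ⟨a, b, c, hg'⟩ := ihg
        obtain ⟨a', b', c', hh'⟩ := ihh
        refine ⟨a + a', b + b', c + c', fun f => ?_⟩
        have : v (g * h) f = v g f + v h f := by simp [v]
        rw [this, hg' f, hh' f]; ring
      | inv g _ ihg =>
        obtain ⟨a, b, c, hg'⟩ := ihg
        refine ⟨-a, -b, -c, fun f => ?_⟩
        have : v g⁻¹ f = -(v g f) := by simp [v]
        rw [this, hg' f]; ring
    have hv : ∀ (u : S) (f : S → ZMod 2), v (FreeGroup.of u) f = f u := by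
      intro u f; simp [v, μ]
    obtain ⟨a, b, c, hs1⟩ := span (FreeGroup.of s)
    obtain ⟨a', b', c', ht1⟩ := span (FreeGroup.of t)
    set ds : S → ZMod 2 := fun u => if u = s then 1 else 0 with hds
    set dt : S → ZMod 2 := fun u => if u = t then 1 else 0 with hdt
    have e1 := claimC ds ds
    have e2 := claimC dt dt
    have e3 := claimC ds dt
    have e4 := hs1 ds
    have e5 := hs1 dt
    have e6 := ht1 dt
    rw [hv s ds] at e4
    rw [hv s dt] at e5
    rw [hv t dt] at e6
    have hds1 : ds s = 1 := by simp [hds]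
    have hdt0 : dt s = 0 := by simp [hdt, hst]
    have hdt1 : dt t = 1 := by simp [hdt]
    rw [hds1] at e4
    rw [hdt0] at e5
    rw [hdt1] at e6
    exact zmodContra (v x ds) (v y ds) (v z ds) (v x dt) (v y dt) (v z dt)
      a b c a' b' c' ⟨e1, e2, e3, e4, e5, e6⟩
  -- with a subsingleton basis, the free group is commutative on our elements
  rcases isEmpty_or_nonempty S with hS | hS
  · have h1 : ∀ g : FreeGroup S, g = 1 := by
      intro g
      rcases h : g.toWord with _ | ⟨⟨u, _⟩, _⟩
      · exact FreeGroup.toWord_eq_nil_iff.mp h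
      · exact isEmptyElim u
    rw [h1 x, h1 y, h1 z]
    simp
  · obtain ⟨s⟩ := hS
    have hall : ∀ g : FreeGroup S, g ∈ Subgroup.zpowers (FreeGroup.of s) := by
      intro g
      induction g using FreeGroup.induction_on with
      | C1 => exact one_mem _
      | of u => rw [Subsingleton.elim u s]; exact Subgroup.mem_zpowers _
      | inv_of u _ => exact inv_mem (by rw [Subsingleton.elim u s]; exact Subgroup.mem_zpowers _)
      | mul g h hg hh => exact mul_mem hg hh
    obtain ⟨m, hm⟩ := hall x
    obtain ⟨n, hn⟩ := hall y
    obtain ⟨k, hk⟩ := hall z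
    rw [← hm, ← hn, ← hk]
    exact ⟨((Commute.refl _).zpow_zpow m n), ((Commute.refl _).zpow_zpow m k),
      ((Commute.refl _).zpow_zpow n k)⟩

/-- Lyndon's theorem. -/
lemma lyndon_theorem {S : Type u} (x y z : FreeGroup S)
    (heq : x ^ 2 * y ^ 2 * z ^ 2 = 1) :
    x * y = y * x ∧ x * z = z * x ∧ y * z = z * y := by
  classical
  set H := Subgroup.closure ({x, y, z} : Set (FreeGroup S)) with hH
  have hx : x ∈ H := Subgroup.subset_closure (by simp)
  have hy : y ∈ H := Subgroup.subset_closure (by simp)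
  have hz : z ∈ H := Subgroup.subset_closure (by simp)
  set x' : H := ⟨x, hx⟩
  set y' : H := ⟨y, hy⟩
  set z' : H := ⟨z, hz⟩
  have heq' : x' ^ 2 * y' ^ 2 * z' ^ 2 = 1 := by
    apply Subtype.ext
    push_cast
    exact heq
  have hgen' : Subgroup.closure ({x', y', z'} : Set H) = ⊤ := by
    have := Subgroup.closure_preimage_eq_top ({x, y, z} : Set (FreeGroup S))
    rw [← this]
    congr 1
    ext g
    simp only [Set.mem_insert_iff, Set.mem_singleton_iff, Set.mem_preimage]
    constructor
    · rintro (rfl | rfl | rfl) <;> simp [x', y', z']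
    · intro h
      rcases h with h | h | h
      · left; exact Subtype.ext h
      · right; left; exact Subtype.ext h
      · right; right; exact Subtype.ext h
  -- transport to a genuine free group via Nielsen–Schreier
  let e : H ≃* FreeGroup (IsFreeGroup.Generators H) := IsFreeGroup.toFreeGroup H
  have heq'' : (e x') ^ 2 * (e y') ^ 2 * (e z') ^ 2 = 1 := by
    rw [← map_pow, ← map_pow, ← map_pow, ← map_mul, ← map_mul, heq', map_one]
  have hgen'' : Subgroup.closure ({e x', e y', e z'} :
      Set (FreeGroup (IsFreeGroup.Generators H))) = ⊤ := by
    have himg : ({e x', e y', e z'} : Set (FreeGroup (IsFreeGroup.Generators H)))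
        = e.toMonoidHom '' ({x', y', z'} : Set H) := by
      simp [Set.image_insert_eq]
    rw [himg, ← MonoidHom.map_closure, hgen']
    rw [← MonoidHom.range_eq_map]
    exact (MonoidHom.range_eq_top).mpr e.surjective
  obtain ⟨c1, c2, c3⟩ := lyndon_core (e x') (e y') (e z') heq'' hgen''
  have d1 : x' * y' = y' * x' := e.injective (by rw [map_mul, map_mul, c1])
  have d2 : x' * z' = z' * x' := e.injective (by rw [map_mul, map_mul, c2])
  have d3 : y' * z' = z' * y' := e.injective (by rw [map_mul, map_mul, c3])
  exact ⟨congrArg Subtype.val d1, congrArg Subtype.val d2, congrArg Subtype.val d3⟩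

-- helper simp lemmas
@[simp] lemma funMap_zero {G : Type*} [Group G] (f : grpLang.Functions 0) (v : Fin 0 → G) :
    Structure.funMap f v = 1 := rfl

@[simp] lemma funMap_two {G : Type*} [Group G] (f : grpLang.Functions 2) (v : Fin 2 → G) :
    Structure.funMap f v = v 0 * v 1 := rfl

lemma realize_tmul {G : Type*} [Group G] {α : Type} {n : ℕ}
    (t s : grpLang.Term (α ⊕ Fin n)) (v : α ⊕ Fin n → G) :
    (tmul t s).realize v = t.realize v * s.realize v := by
  simp [tmul, Term.realize]
  rfl

lemma realize_tone {G : Type*} [Group G] {α : Type} {n : ℕ} (v : α ⊕ Fin n → G) :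
    (tone (α := α) (n := n)).realize v = 1 := by
  simp [tone, Term.realize]
  rfl

lemma realize_lyndon_iff (G : Type*) [Group G] :
    G ⊨ lyndonSentence ↔ ∀ x y z : G, x * x * (y * y) * (z * z) = 1 →
      (x * y = y * x ∧ x * z = z * x ∧ y * z = z * y) := by
  rw [lyndonSentence, Sentence.Realize, Formula.Realize]
  simp only [BoundedFormula.realize_all, BoundedFormula.realize_imp,
    BoundedFormula.realize_inf, eqForm, commForm, BoundedFormula.realize_bdEqual,
    realize_tmul, realize_tone, Term.realize_var, Sum.elim_inr, Function.comp_apply]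
  have s0 : ∀ x y z : G,
      (Fin.snoc (Fin.snoc (Fin.snoc (default : Fin 0 → G) x) y) z : Fin 3 → G) 0 = x :=
    fun x y z => by simp [Fin.snoc]
  have s1 : ∀ x y z : G,
      (Fin.snoc (Fin.snoc (Fin.snoc (default : Fin 0 → G) x) y) z : Fin 3 → G) 1 = y :=
    fun x y z => by simp [Fin.snoc]
  have s2 : ∀ x y z : G,
      (Fin.snoc (Fin.snoc (Fin.snoc (default : Fin 0 → G) x) y) z : Fin 3 → G) 2 = z :=
    fun x y z => by simp [Fin.snoc]
  simp only [s0, s1, s2]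
  exact ⟨fun h x y z hx => and_assoc.mp (h x y z hx),
    fun h x y z hx => and_assoc.mpr (h x y z hx)⟩

/-- A `grpLang`-equivalence from a `MulEquiv`. -/
def mulEquivToLangEquiv {G H : Type*} [Group G] [Group H] (e : G ≃* H) :
    grpLang.Equiv G H where
  toEquiv := e.toEquiv
  map_fun' := by
    intro n f xs
    match n, f with
    | 0, _ => exact map_one e
    | 1, _ => exact map_inv e _
    | 2, _ => exact map_mul e _ _
  map_rel' := by intro n r; cases r

lemma surface_rel_holds :
    (PresentedGroup.of (rels := surfaceRels) 0) ^ 2 *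
    (PresentedGroup.of (rels := surfaceRels) 1) ^ 2 *
    (PresentedGroup.of (rels := surfaceRels) 2) ^ 2 = 1 := by
  have h : (QuotientGroup.mk' (Subgroup.normalClosure surfaceRels))
      (FreeGroup.of 0 ^ 2 * FreeGroup.of 1 ^ 2 * FreeGroup.of 2 ^ 2) = 1 := by
    rw [QuotientGroup.mk'_apply, QuotientGroup.eq_one_iff]
    exact Subgroup.subset_normalClosure rfl
  rw [map_mul, map_mul, map_pow, map_pow, map_pow] at h
  exact h

def sgens : Fin 3 → Equiv.Perm (Fin 3) := ![Equiv.swap 0 1, Equiv.swap 0 2, 1]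

lemma sgens_rel : ∀ r ∈ surfaceRels, FreeGroup.lift sgens r = 1 := by
  intro r hr
  rw [surfaceRels, Set.mem_singleton_iff] at hr
  subst hr
  simp only [map_mul, map_pow, FreeGroup.lift_apply_of]
  decide

lemma surface_not_comm :
    PresentedGroup.of (rels := surfaceRels) 0 * PresentedGroup.of (rels := surfaceRels) 1 ≠
    PresentedGroup.of (rels := surfaceRels) 1 * PresentedGroup.of (rels := surfaceRels) 0 := by
  intro h
  have := congrArg (PresentedGroup.toGroup sgens_rel) h
  simp only [map_mul, PresentedGroup.toGroup.of] at this
  revert this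
  decide

lemma freeGroup_satisfies_lyndon : (FreeGroup (Fin 2) : Type) ⊨ lyndonSentence := by
  rw [realize_lyndon_iff]
  intro x y z hxyz
  have heq : x ^ 2 * y ^ 2 * z ^ 2 = 1 := by
    rw [pow_two, pow_two, pow_two]; exact hxyz
  exact lyndon_theorem x y z heq

lemma surfaceGroup_not_satisfies_lyndon : ¬ ((SurfaceGroup : Type) ⊨ lyndonSentence) := by
  intro h
  rw [realize_lyndon_iff] at h
  have heq : (PresentedGroup.of (rels := surfaceRels) 0) *
      (PresentedGroup.of (rels := surfaceRels) 0) *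
      ((PresentedGroup.of (rels := surfaceRels) 1) * (PresentedGroup.of (rels := surfaceRels) 1)) *
      ((PresentedGroup.of (rels := surfaceRels) 2) * (PresentedGroup.of (rels := surfaceRels) 2))
      = 1 := by
    have := surface_rel_holds
    rw [pow_two, pow_two, pow_two] at this
    exact this
  exact surface_not_comm (h _ _ _ heq).1

/-- Elementary equivalence is an equivalence relation preserved under
isomorphism; elementarily equivalent groups satisfy the same sentences; and the
genus-3 non-orientable surface group is not elementarily equivalent to the free
group of rank 2, witnessed by the sentence
`∀x∀y∀z (x²y²z² = 1 → ([x,y]=1 ∧ [x,z]=1 ∧ [y,z]=1))`. -/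
theorem surfaceGroup_not_elementarilyEquivalent_free :
    (∀ (G : Type) [Group G], G ≅[grpLang] G) ∧
    (∀ (G H : Type) [Group G] [Group H], (G ≅[grpLang] H) → (H ≅[grpLang] G)) ∧
    (∀ (G H K : Type) [Group G] [Group H] [Group K],
      (G ≅[grpLang] H) → (H ≅[grpLang] K) → (G ≅[grpLang] K)) ∧
    (∀ (G H : Type) [Group G] [Group H], (G ≃* H) → (G ≅[grpLang] H)) ∧
    (∀ (G H : Type) [Group G] [Group H] (σ : grpLang.Sentence),
      (G ≅[grpLang] H) → G ⊨ σ → H ⊨ σ) ∧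
    ((FreeGroup (Fin 2) : Type) ⊨ lyndonSentence) ∧
    ¬ ((SurfaceGroup : Type) ⊨ lyndonSentence) ∧
    ¬ (SurfaceGroup ≅[grpLang] FreeGroup (Fin 2)) := by
  refine ⟨?_, ?_, ?_, ?_, ?_, ?_, ?_, ?_⟩
  · intro G _
    rfl
  · intro G H _ _ h
    exact h.symm
  · intro G H K _ _ _ h1 h2
    exact h1.trans h2
  · intro G H _ _ e
    exact StrongHomClass.elementarilyEquivalent (mulEquivToLangEquiv e)
  · intro G H _ _ σ h hG
    exact (h.realize_sentence σ).mp hG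
  · exact freeGroup_satisfies_lyndon
  · exact surfaceGroup_not_satisfies_lyndon
  · intro h
    exact surfaceGroup_not_satisfies_lyndon
      ((h.realize_sentence lyndonSentence).mpr freeGroup_satisfies_lyndon)
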